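/- Let G be the subring of ℂ[[X]] consisting of power series Σ_{n≥0} a_n X^n for which there exist A, C > 0 with |a_n| ≤ A·C^n·n! for all n. Then G is a discrete valuation ring whose maximal ideal is generated by X; in particular every nonzero element of G can be written as X^m·u for a unique m ∈ ℕ and a unit u of G. -/

import Mathlib

/-!
Two closure properties of the Gevrey growth condition make `G` a discrete valuation ring: it
survives division by `X` (the extra factor `n + 1` is absorbed by `2 ^ n`), and it survives
inversion of a series with nonzero constant term. For the latter, the weights `‖bₙ‖ / n!` of the
inverse `∑ bₙ Xⁿ` satisfy, because `i! j! ≤ (i + j)!`, a convolution recurrence with a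
geometrically bounded kernel, and such sequences grow at most geometrically. Hence the units of
`G` are the series with nonzero constant term, and every nonzero `f ∈ G` is `X ^ ord f` times one
of them.
-/

/-- The Gevrey-type growth condition defining the ring `G = k₀ = W_pt(0)` of the paper
(written in the variable `X = τ⁻¹`): `|a_n| ≤ A·C^n·n!` for some `A, C > 0`. -/
def Gevrey (f : PowerSeries ℂ) : Prop :=
  ∃ A C : ℝ, 0 < A ∧ 0 < C ∧
    ∀ n : ℕ, ‖PowerSeries.coeff n f‖ ≤ A * C ^ n * n.factorial

open PowerSeries Finset
open scoped Nat

theorem le_mul_pow_of_le_sum_antidiagonal {c : ℕ → ℝ} {M C : ℝ} (hM : 0 ≤ M) (hC : 0 ≤ C)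
    (h0 : 0 ≤ c 0) (hc : ∀ n, c (n + 1) ≤ M * ∑ p ∈ antidiagonal n, C ^ (p.1 + 1) * c p.2)
    (n : ℕ) : c n ≤ c 0 * (M * C + C) ^ n := by
  induction n using Nat.strong_induction_on with
  | _ n ih =>
  rcases n with _ | n
  · simp
  set D := M * C + C
  have hgeom : (∑ i ∈ range (n + 1), D ^ i * C ^ (n - i)) * (M * C) + C ^ (n + 1) = D ^ (n + 1) :=
    geom_sum₂_mul_add (M * C) C (n + 1)
  calc c (n + 1) ≤ M * ∑ p ∈ antidiagonal n, C ^ (p.1 + 1) * c p.2 := hc n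
    _ ≤ M * ∑ p ∈ antidiagonal n, C ^ (p.1 + 1) * (c 0 * D ^ p.2) := by
        gcongr with p hp
        exact ih p.2 (by have := mem_antidiagonal.mp hp; omega)
    _ = c 0 * ((∑ i ∈ range (n + 1), D ^ i * C ^ (n - i)) * (M * C)) := by
        rw [← Nat.sum_antidiagonal_swap]
        simp only [Prod.fst_swap, Prod.snd_swap]
        rw [Nat.sum_antidiagonal_eq_sum_range_succ (fun i j => C ^ (j + 1) * (c 0 * D ^ i)),
          mul_sum, sum_mul, mul_sum]
        refine sum_congr rfl fun i _ => ?_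
        ring
    _ = c 0 * (D ^ (n + 1) - C ^ (n + 1)) := by rw [← hgeom]; ring
    _ ≤ c 0 * D ^ (n + 1) := by gcongr; exact sub_le_self _ (by positivity)

theorem Gevrey.of_X_mul {g : ℂ⟦X⟧} (h : Gevrey (X * g)) : Gevrey g := by
  obtain ⟨A, C, hA, hC, hg⟩ := h
  refine ⟨A * C, 2 * C, by positivity, by positivity, fun n => ?_⟩
  have hn : (n + 1 : ℝ) ≤ 2 ^ n := by exact_mod_cast Nat.lt_two_pow_self
  calc ‖coeff n g‖ = ‖coeff (n + 1) (X * g)‖ := by rw [coeff_succ_X_mul]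
    _ ≤ A * C ^ (n + 1) * (n + 1)! := hg (n + 1)
    _ = A * C * C ^ n * n ! * (n + 1 : ℝ) := by push_cast [Nat.factorial_succ]; ring
    _ ≤ A * C * C ^ n * n ! * 2 ^ n := by gcongr
    _ = A * C * (2 * C) ^ n * n ! := by ring

theorem constantCoeff_mul_coeff_succ_inv {k : Type*} [Field k] {f : k⟦X⟧}
    (h0 : constantCoeff f ≠ 0) (n : ℕ) :
    constantCoeff f * coeff (n + 1) f⁻¹ =
      -∑ p ∈ antidiagonal n, coeff (p.1 + 1) f * coeff p.2 f⁻¹ := by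
  have := congrArg (coeff (n + 1)) (PowerSeries.mul_inv_cancel f h0)
  rw [coeff_mul, Nat.sum_antidiagonal_succ, coeff_one, if_neg n.succ_ne_zero,
    coeff_zero_eq_constantCoeff] at this
  exact eq_neg_of_add_eq_zero_left this

theorem norm_coeff_succ_inv_div_factorial_le {𝕜 : Type*} [NormedField 𝕜] {f : 𝕜⟦X⟧} {A C : ℝ}
    (hA : 0 ≤ A) (hC : 0 ≤ C) (hf : ∀ n, ‖coeff n f‖ ≤ A * C ^ n * n !)
    (h0 : constantCoeff f ≠ 0) (n : ℕ) :
    ‖coeff (n + 1) f⁻¹‖ / (n + 1)! ≤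
      ‖constantCoeff f‖⁻¹ * A *
        ∑ p ∈ antidiagonal n, C ^ (p.1 + 1) * (‖coeff p.2 f⁻¹‖ / p.2 !) := by
  have hterm : ∀ p ∈ antidiagonal n, ‖coeff (p.1 + 1) f * coeff p.2 f⁻¹‖ / (n + 1)! ≤
      A * (C ^ (p.1 + 1) * (‖coeff p.2 f⁻¹‖ / p.2 !)) := by
    intro p hp
    have hfact : ((p.1 + 1)! * p.2 ! : ℝ) ≤ (n + 1)! := by
      have hsum : p.1 + 1 + p.2 = n + 1 := by have := mem_antidiagonal.mp hp; omega
      exact_mod_cast hsum ▸ Nat.le_of_dvd (Nat.factorial_pos _)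
        (Nat.factorial_mul_factorial_dvd_factorial_add _ _)
    rw [norm_mul, div_le_iff₀ (by positivity)]
    calc ‖coeff (p.1 + 1) f‖ * ‖coeff p.2 f⁻¹‖
        ≤ A * C ^ (p.1 + 1) * (p.1 + 1)! * ‖coeff p.2 f⁻¹‖ := by gcongr; exact hf _
      _ = A * (C ^ (p.1 + 1) * (‖coeff p.2 f⁻¹‖ / p.2 !)) * ((p.1 + 1)! * p.2 !) := by
          field_simp
      _ ≤ A * (C ^ (p.1 + 1) * (‖coeff p.2 f⁻¹‖ / p.2 !)) * (n + 1)! := by gcongr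
  calc ‖coeff (n + 1) f⁻¹‖ / (n + 1)!
      = ‖constantCoeff f‖⁻¹ * (‖constantCoeff f * coeff (n + 1) f⁻¹‖ / (n + 1)!) := by
        rw [norm_mul, mul_div_assoc, inv_mul_cancel_left₀ (norm_ne_zero_iff.mpr h0)]
    _ ≤ ‖constantCoeff f‖⁻¹ *
          ∑ p ∈ antidiagonal n, ‖coeff (p.1 + 1) f * coeff p.2 f⁻¹‖ / (n + 1)! := by
        rw [constantCoeff_mul_coeff_succ_inv h0, norm_neg, ← sum_div]
        gcongr
        exact norm_sum_le _ _
    _ ≤ ‖constantCoeff f‖⁻¹ *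
          ∑ p ∈ antidiagonal n, A * (C ^ (p.1 + 1) * (‖coeff p.2 f⁻¹‖ / p.2 !)) := by
        gcongr with p hp
        exact hterm p hp
    _ = _ := by rw [← mul_sum, mul_assoc]

theorem Gevrey.inv {f : ℂ⟦X⟧} (hf : Gevrey f) (h0 : constantCoeff f ≠ 0) : Gevrey f⁻¹ := by
  obtain ⟨A, C, hA, hC, hfA⟩ := hf
  set c : ℕ → ℝ := fun n => ‖coeff n f⁻¹‖ / (n ! : ℝ)
  have hc0 : 0 < c 0 := by simpa [c] using h0
  have hc := le_mul_pow_of_le_sum_antidiagonal (by positivity) hC.le hc0.le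
    (norm_coeff_succ_inv_div_factorial_le hA.le hC.le hfA h0)
  refine ⟨c 0, ‖constantCoeff f‖⁻¹ * A * C + C, hc0, by positivity, fun n => ?_⟩
  rw [← div_le_iff₀ (by positivity)]
  exact hc n

section

variable {k : Type*} [Field k] {S : Subalgebra k k⟦X⟧}

theorem isLocalHom_val_of_inv_mem (inv_mem : ∀ f ∈ S, constantCoeff f ≠ 0 → f⁻¹ ∈ S) :
    IsLocalHom S.val := by
  refine ⟨fun f hf => ?_⟩
  have h0 : constantCoeff (f : k⟦X⟧) ≠ 0 := (isUnit_iff_constantCoeff.mp hf).ne_zero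
  exact IsUnit.of_mul_eq_one ⟨_, inv_mem f f.2 h0⟩ (Subtype.ext (PowerSeries.mul_inv_cancel _ h0))

theorem mem_of_X_pow_mul_mem (X_mul_mem : ∀ g, X * g ∈ S → g ∈ S) {g : k⟦X⟧} :
    ∀ {n : ℕ}, X ^ n * g ∈ S → g ∈ S
  | 0, h => by simpa using h
  | n + 1, h => mem_of_X_pow_mul_mem X_mul_mem (X_mul_mem _ (by rwa [pow_succ', mul_assoc] at h))

theorem irreducible_of_coe_eq_X (inv_mem : ∀ f ∈ S, constantCoeff f ≠ 0 → f⁻¹ ∈ S)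
    {x : S} (hx : (x : k⟦X⟧) = X) : Irreducible x :=
  have := isLocalHom_val_of_inv_mem inv_mem
  Irreducible.of_map (f := S.val) (by simpa [hx] using X_irreducible)

theorem exists_eq_pow_mul_unit (inv_mem : ∀ f ∈ S, constantCoeff f ≠ 0 → f⁻¹ ∈ S)
    (X_mul_mem : ∀ g, X * g ∈ S → g ∈ S) {x : S} (hx : (x : k⟦X⟧) = X) {f : S} (hf : f ≠ 0) :
    ∃ m : ℕ, ∃ u : Sˣ, f = x ^ m * u := by
  have := isLocalHom_val_of_inv_mem inv_mem
  have hfX := X_pow_order_mul_divXPowOrder (f := (f : k⟦X⟧))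
  have hg : divXPowOrder (f : k⟦X⟧) ∈ S := mem_of_X_pow_mul_mem X_mul_mem (hfX ▸ f.2)
  have hunit : IsUnit (⟨_, hg⟩ : S) := isUnit_of_map_unit S.val _ <|
    isUnit_iff_constantCoeff.mpr <| isUnit_iff_ne_zero.mpr <|
      constantCoeff_divXPowOrder_eq_zero_iff.not.mpr (by exact_mod_cast hf)
  exact ⟨_, hunit.unit, Subtype.ext (by simpa [hx] using hfX.symm)⟩

theorem isDiscreteValuationRing_of_coe_eq_X (inv_mem : ∀ f ∈ S, constantCoeff f ≠ 0 → f⁻¹ ∈ S)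
    (X_mul_mem : ∀ g, X * g ∈ S → g ∈ S) {x : S} (hx : (x : k⟦X⟧) = X) :
    IsDiscreteValuationRing S :=
  IsDiscreteValuationRing.ofHasUnitMulPowIrreducibleFactorization
    ⟨x, irreducible_of_coe_eq_X inv_mem hx, fun hf => by
      obtain ⟨m, u, rfl⟩ := exists_eq_pow_mul_unit inv_mem X_mul_mem hx hf
      exact ⟨m, u, rfl⟩⟩

end

/-- `G` (realized as a subalgebra `S` of `ℂ[[X]]`, with `x ∈ S` the
element `X`) is a discrete valuation ring whose maximal ideal is generated by `X`;
in particular every nonzero element of `G` is `X^m·u` for a unique `m ∈ ℕ` and a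
unit `u` of `G`. -/
theorem gevrey_dvr (S : Subalgebra ℂ (PowerSeries ℂ))
    (hS : (S : Set (PowerSeries ℂ)) = {f | Gevrey f})
    (x : S) (hx : (x : PowerSeries ℂ) = PowerSeries.X) :
    IsDiscreteValuationRing S ∧
    (∃ h : IsLocalRing S, (@IsLocalRing.maximalIdeal S _ h : Ideal S) = Ideal.span {x}) ∧
    (∀ f : S, f ≠ 0 → ∃! m : ℕ, ∃ u : Sˣ, f = x ^ m * (u : S)) := by
  have hmem (f : ℂ⟦X⟧) : f ∈ S ↔ Gevrey f := Set.ext_iff.mp hS f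
  have inv_mem (f) (hf : f ∈ S) (h0 : constantCoeff f ≠ 0) : f⁻¹ ∈ S :=
    (hmem _).mpr (((hmem f).mp hf).inv h0)
  have X_mul_mem (g) (hg : X * g ∈ S) : g ∈ S := (hmem g).mpr ((hmem _).mp hg).of_X_mul
  have hirr := irreducible_of_coe_eq_X inv_mem hx
  have hdvr := isDiscreteValuationRing_of_coe_eq_X inv_mem X_mul_mem hx
  refine ⟨hdvr, ⟨inferInstance, (IsDiscreteValuationRing.irreducible_iff_uniformizer x).mp hirr⟩,
    fun f hf => ?_⟩
  obtain ⟨m, u, rfl⟩ := exists_eq_pow_mul_unit inv_mem X_mul_mem hx hf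
  refine ⟨m, ⟨u, rfl⟩, fun n ⟨v, hv⟩ => ?_⟩
  exact IsDiscreteValuationRing.unit_mul_pow_congr_pow hirr hirr v u n m
    (by rw [mul_comm, ← hv, mul_comm])
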